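/- Let (Ω, ℱ, P) be a probability space, μ = λ ⊗ P the product of Lebesgue measure on [0,1] with P, and U ⊂ ℝ a nonempty compact set. Let f : [0,1] × ℝ × ℝ × U → ℝ be measurable with |f| ≤ K everywhere and |f(t,x,y,u) − f(t,x',y',u)| ≤ L(|x−x'| + |y−y'|) for all t, u and all (x,y), (x',y'). Let x, y, x', y' : [0,1] × Ω → ℝ be measurable, let u, u' : [0,1] × Ω → U be measurable, and let 1 < τ < 2. Then there exists a constant C, depending only on τ, K and L, such that ∫ |f(t, x, y, u) − f(t, x', y', u')|^τ dμ ≤ C·[ d(u,u')^{1 − τ/2} + ∫ (|x − x'| + |y − y'|)^τ dμ ], where d(u,u') = μ({(t,ω) : u(t,ω) ≠ u'(t,ω)}). -/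

import Mathlib

/-!
Split `[0,1] × Ω` along `S = {u ≠ u'}`. On `S` the integrand is at most `(2K)^τ`, so that part
contributes at most `(2K)^τ μ(S)`, and `μ(S) ≤ μ(S)^(1 - τ/2)` because `μ` is a probability
measure. Off `S` the controls agree, so the Lipschitz bound gives
`|f(t,x,y,u) − f(t,x',y',u)|^τ ≤ L^τ (|x − x'| + |y − y'|)^τ`.
-/

open MeasureTheory
open scoped ENNReal

instance isProbabilityMeasure_volume_restrict_Icc_zero_one :
    IsProbabilityMeasure (volume.restrict (Set.Icc (0 : ℝ) 1)) :=
  ⟨by simp⟩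

theorem lintegral_le_mul_measure_add_mul_lintegral {α : Type*} [MeasurableSpace α]
    {μ : Measure α} {S : Set α} (hS : MeasurableSet S) {g h : α → ℝ≥0∞} {a b : ℝ≥0∞}
    (hb : b ≠ ∞) (hg_mem : ∀ p ∈ S, g p ≤ a) (hg_notMem : ∀ p ∉ S, g p ≤ b * h p) :
    ∫⁻ p, g p ∂μ ≤ a * μ S + b * ∫⁻ p, h p ∂μ := by
  rw [← lintegral_add_compl g hS]
  gcongr ?_ + ?_
  · calc ∫⁻ p in S, g p ∂μ ≤ ∫⁻ _ in S, a ∂μ := setLIntegral_mono' hS hg_mem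
      _ = a * μ S := setLIntegral_const S a
  · calc ∫⁻ p in Sᶜ, g p ∂μ ≤ ∫⁻ p in Sᶜ, b * h p ∂μ := setLIntegral_mono' hS.compl hg_notMem
      _ ≤ ∫⁻ p, b * h p ∂μ := setLIntegral_le_lintegral _ _
      _ = b * ∫⁻ p, h p ∂μ := lintegral_const_mul' b h hb

lemma abs_sub_rpow_le_of_abs_le {a b K τ : ℝ} (hτ : 0 ≤ τ) (ha : |a| ≤ K) (hb : |b| ≤ K) :
    |a - b| ^ τ ≤ (2 * K) ^ τ :=
  Real.rpow_le_rpow (abs_nonneg _) (by linarith [abs_sub a b]) hτ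

lemma abs_sub_rpow_le_of_abs_sub_le {a b L s τ : ℝ} (hτ : 0 ≤ τ) (hs : 0 ≤ s)
    (h : |a - b| ≤ L * s) : |a - b| ^ τ ≤ |L| ^ τ * s ^ τ := by
  rw [← Real.mul_rpow (abs_nonneg L) hs]
  exact Real.rpow_le_rpow (abs_nonneg _)
    (h.trans (mul_le_mul_of_nonneg_right (le_abs_self L) hs)) hτ

theorem lintegral_rpow_abs_sub_le {α : Type*} [MeasurableSpace α] {μ : Measure α}
    {S : Set α} (hS : MeasurableSet S) {F G d : α → ℝ} {K L τ : ℝ} (hτ : 0 ≤ τ)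
    (hF : ∀ p, |F p| ≤ K) (hG : ∀ p, |G p| ≤ K) (hd : ∀ p, 0 ≤ d p)
    (hFG : ∀ p ∉ S, |F p - G p| ≤ L * d p) :
    ∫⁻ p, ENNReal.ofReal (|F p - G p| ^ τ) ∂μ ≤
      ENNReal.ofReal ((2 * K) ^ τ) * μ S +
        ENNReal.ofReal (|L| ^ τ) * ∫⁻ p, ENNReal.ofReal (d p ^ τ) ∂μ := by
  refine lintegral_le_mul_measure_add_mul_lintegral hS ENNReal.ofReal_ne_top
    (fun p _ ↦ ENNReal.ofReal_le_ofReal (abs_sub_rpow_le_of_abs_le hτ (hF p) (hG p)))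
    (fun p hp ↦ ?_)
  rw [← ENNReal.ofReal_mul (Real.rpow_nonneg (abs_nonneg L) τ)]
  exact ENNReal.ofReal_le_ofReal (abs_sub_rpow_le_of_abs_sub_le hτ (hd p) (hFG p hp))

theorem stmt_7_general (τ K L : ℝ) (hτ1 : 1 < τ) :
    ∃ C : ℝ, 0 < C ∧
      ∀ (Ω : Type u) [MeasurableSpace Ω] (P : Measure Ω) [IsProbabilityMeasure P]
        (μ : Measure (ℝ × Ω)), μ = (volume.restrict (Set.Icc (0 : ℝ) 1)).prod P →
      ∀ (U : Set ℝ), U.Nonempty → IsCompact U →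
      ∀ f : ℝ → ℝ → ℝ → ℝ → ℝ,
        Measurable (fun q : ℝ × ℝ × ℝ × ℝ => f q.1 q.2.1 q.2.2.1 q.2.2.2) →
        (∀ t x y : ℝ, ∀ u ∈ U, |f t x y u| ≤ K) →
        (∀ t : ℝ, ∀ u ∈ U, ∀ x y x' y' : ℝ,
          |f t x y u - f t x' y' u| ≤ L * (|x - x'| + |y - y'|)) →
      ∀ x y x' y' : ℝ × Ω → ℝ,
        Measurable x → Measurable y → Measurable x' → Measurable y' →
      ∀ u u' : ℝ × Ω → ℝ, Measurable u → Measurable u' →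
        (∀ p, u p ∈ U) → (∀ p, u' p ∈ U) →
        ∫⁻ p, ENNReal.ofReal
            (|f p.1 (x p) (y p) (u p) - f p.1 (x' p) (y' p) (u' p)| ^ τ) ∂μ ≤
          ENNReal.ofReal C *
            ((μ {p | u p ≠ u' p}) ^ (1 - τ / 2) +
              ∫⁻ p, ENNReal.ofReal ((|x p - x' p| + |y p - y' p|) ^ τ) ∂μ) := by
  have hτ : 0 ≤ τ := by linarith
  have hK_le : 0 ≤ (2 * |K|) ^ τ := by positivity
  have hL_le : 0 ≤ |L| ^ τ := by positivity
  refine ⟨(2 * |K|) ^ τ + |L| ^ τ + 1, by positivity, ?_⟩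
  intro Ω _ P _ μ hμ U _ _ f _ hK hL x y x' y' _ _ _ _ u u' hu hu' huU hu'U
  have : IsProbabilityMeasure μ := hμ ▸ inferInstance
  set S := {p | u p ≠ u' p}
  have hS : MeasurableSet S := (measurableSet_eq_fun hu hu').compl
  have hμS : μ S ≤ μ S ^ (1 - τ / 2) := by
    simpa using ENNReal.rpow_le_rpow_of_exponent_ge prob_le_one (by linarith : 1 - τ / 2 ≤ 1)
  have hK' : ∀ t a b, ∀ v ∈ U, |f t a b v| ≤ |K| := fun t a b v hv ↦
    (hK t a b v hv).trans (le_abs_self K)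
  calc _ ≤ ENNReal.ofReal ((2 * |K|) ^ τ) * μ S + ENNReal.ofReal (|L| ^ τ) *
        ∫⁻ p, ENNReal.ofReal ((|x p - x' p| + |y p - y' p|) ^ τ) ∂μ :=
      lintegral_rpow_abs_sub_le hS hτ (fun p ↦ hK' _ _ _ _ (huU p))
        (fun p ↦ hK' _ _ _ _ (hu'U p)) (fun p ↦ by positivity)
        (fun p hp ↦ not_not.mp hp ▸ hL p.1 _ (huU p) _ _ _ _)
    _ ≤ ENNReal.ofReal ((2 * |K|) ^ τ + |L| ^ τ + 1) * μ S ^ (1 - τ / 2) +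
        ENNReal.ofReal ((2 * |K|) ^ τ + |L| ^ τ + 1) *
          ∫⁻ p, ENNReal.ofReal ((|x p - x' p| + |y p - y' p|) ^ τ) ∂μ := by
      gcongr <;> linarith
    _ = _ := (mul_add _ _ _).symm

/-- The central estimate in the proof of Lemma 6.5 of the paper: for `1 < τ < 2` and a
bounded coefficient `f` (`|f| ≤ K`), Lipschitz in the state variables with constant `L`,
there is a constant `C > 0` depending only on `τ, K, L` such that for any probability
space, any measurable states `x, y, x', y'` and any measurable `U`-valued controls `u, u'`,
`∫ |f(t,x,y,u) − f(t,x',y',u')|^τ dμ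
   ≤ C [ d(u,u')^{1−τ/2} + ∫ (|x−x'| + |y−y'|)^τ dμ ]`,
where `μ = λ⊗P` on `[0,1] × Ω` and `d(u,u') = μ({u ≠ u'})`. -/
theorem stmt_7 (τ K L : ℝ) (hτ1 : 1 < τ) (hτ2 : τ < 2) :
    ∃ C : ℝ, 0 < C ∧
      ∀ (Ω : Type u) [MeasurableSpace Ω] (P : Measure Ω) [IsProbabilityMeasure P]
        (μ : Measure (ℝ × Ω)), μ = (volume.restrict (Set.Icc (0 : ℝ) 1)).prod P →
      ∀ (U : Set ℝ), U.Nonempty → IsCompact U →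
      ∀ f : ℝ → ℝ → ℝ → ℝ → ℝ,
        Measurable (fun q : ℝ × ℝ × ℝ × ℝ => f q.1 q.2.1 q.2.2.1 q.2.2.2) →
        (∀ t x y : ℝ, ∀ u ∈ U, |f t x y u| ≤ K) →
        (∀ t : ℝ, ∀ u ∈ U, ∀ x y x' y' : ℝ,
          |f t x y u - f t x' y' u| ≤ L * (|x - x'| + |y - y'|)) →
      ∀ x y x' y' : ℝ × Ω → ℝ,
        Measurable x → Measurable y → Measurable x' → Measurable y' →
      ∀ u u' : ℝ × Ω → ℝ, Measurable u → Measurable u' →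
        (∀ p, u p ∈ U) → (∀ p, u' p ∈ U) →
        ∫⁻ p, ENNReal.ofReal
            (|f p.1 (x p) (y p) (u p) - f p.1 (x' p) (y' p) (u' p)| ^ τ) ∂μ ≤
          ENNReal.ofReal C *
            ((μ {p | u p ≠ u' p}) ^ (1 - τ / 2) +
              ∫⁻ p, ENNReal.ofReal ((|x p - x' p| + |y p - y' p|) ^ τ) ∂μ) :=
  stmt_7_general τ K L hτ1
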